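/- Let g ≥ 1 and let φ : ℂ[x₁,…,x_g, y₁,…,y_g] → ℂ[x₁,…,x_g] be the ring homomorphism with φ(x_i) = x_i and φ(y_i) = −x_i for all i. Then: (1) φ maps the ideal J_{g,g} into the ideal I_g; and (2) φ(e₁(y)·e₂(y) ⋯ e_g(y)) = (−1)^{g(g+1)/2} e₁ e₂ ⋯ e_g does NOT belong to I_g. Consequently, under the induced map of quotient rings (the restriction map from the compact dual of U(g,g) to the compact dual of Sp(2g)), the class τ₁τ₂⋯τ_g maps to a nonzero element, namely ± the top-degree class σ₁σ₂⋯σ_g. -/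

import Mathlib

open MvPolynomial

/-- `e_r(x)`, the `r`-th elementary symmetric polynomial in the `x`-variables
`x₁,…,x_p` of `ℂ[x₁,…,x_p, y₁,…,y_q]` (zero for `r > p`, and `e₀ = 1`). -/
noncomputable def ex (p q r : ℕ) : MvPolynomial (Fin p ⊕ Fin q) ℂ :=
  rename Sum.inl (esymm (Fin p) ℂ r)

/-- `e_s(y)`, the `s`-th elementary symmetric polynomial in the `y`-variables
`y₁,…,y_q` of `ℂ[x₁,…,x_p, y₁,…,y_q]` (zero for `s > q`, and `e₀ = 1`). -/
noncomputable def ey (p q s : ℕ) : MvPolynomial (Fin p ⊕ Fin q) ℂ :=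
  rename Sum.inr (esymm (Fin q) ℂ s)

/-- `c_k = Σ_{r+s=k} e_r(x) e_s(y)`, the degree-`k` homogeneous component of
`∏ᵢ(1+xᵢ) · ∏ⱼ(1+yⱼ) - 1`. -/
noncomputable def ck (p q k : ℕ) : MvPolynomial (Fin p ⊕ Fin q) ℂ :=
  ∑ r ∈ Finset.range (k + 1), ex p q r * ey p q (k - r)

/-- The ideal `J_{p,q}` generated by the `c_k` for `1 ≤ k ≤ p + q`. -/
noncomputable def Jpq (p q : ℕ) : Ideal (MvPolynomial (Fin p ⊕ Fin q) ℂ) :=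
  Ideal.span {f | ∃ k : ℕ, 1 ≤ k ∧ k ≤ p + q ∧ f = ck p q k}

/-- `esq g k` is `e_k(x₁²,…,x_g²)`. -/
noncomputable def esq (g k : ℕ) : MvPolynomial (Fin g) ℂ :=
  aeval (fun i : Fin g => (X i : MvPolynomial (Fin g) ℂ) ^ 2) (esymm (Fin g) ℂ k)

/-- The ideal `I_g` generated by `e_k(x₁²,…,x_g²)` for `1 ≤ k ≤ g`. -/
noncomputable def Ig (g : ℕ) : Ideal (MvPolynomial (Fin g) ℂ) :=
  Ideal.span {p | ∃ k : ℕ, 1 ≤ k ∧ k ≤ g ∧ p = esq g k}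

/-- The ring homomorphism `ℂ[x₁,…,x_g, y₁,…,y_g] → ℂ[x₁,…,x_g]` with
`x_i ↦ x_i` and `y_i ↦ -x_i`, induced by the holomorphic embedding
`Sp(2g) ⊂ U(g,g)` on the presentations of the cohomology of compact duals. -/
noncomputable def phi (g : ℕ) :
    MvPolynomial (Fin g ⊕ Fin g) ℂ →ₐ[ℂ] MvPolynomial (Fin g) ℂ :=
  aeval (Sum.elim (fun i => X i) (fun i => - X i))

namespace Stmt11

open Finset

variable {ι : Type*} {R : Type*} [CommRing R]

lemma sum_powersetCard_insert [DecidableEq ι] {a : ι} {s : Finset ι} (ha : a ∉ s)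
    (f : ι → R) (m : ℕ) :
    ∑ t ∈ (insert a s).powersetCard (m+1), ∏ i ∈ t, f i
      = (∑ t ∈ s.powersetCard (m+1), ∏ i ∈ t, f i)
        + f a * ∑ t ∈ s.powersetCard m, ∏ i ∈ t, f i := by
  rw [Finset.powersetCard_succ_insert ha, Finset.sum_union, Finset.sum_image, Finset.mul_sum]
  · congr 1
    refine Finset.sum_congr rfl fun t ht => ?_
    rw [Finset.mem_powersetCard] at ht
    rw [Finset.prod_insert (fun hat => ha (ht.1 hat))]
  · intro t ht u hu h
    rw [Finset.mem_coe, Finset.mem_powersetCard] at ht hu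
    apply_fun (Finset.erase · a) at h
    rwa [Finset.erase_insert (fun hat => ha (ht.1 hat)),
      Finset.erase_insert (fun hau => ha (hu.1 hau))] at h
  · rw [Finset.disjoint_right]
    intro t ht hts
    rw [Finset.mem_image] at ht
    obtain ⟨u, hu, rfl⟩ := ht
    rw [Finset.mem_powersetCard] at hts
    exact ha (hts.1 (Finset.mem_insert_self a u))

lemma coeff_prod_one_add [DecidableEq ι] (d : ℕ) (hd : 0 < d) (s : Finset ι) (f : ι → R) :
    ∀ k, (∏ i ∈ s, (1 + Polynomial.C (f i) * Polynomial.X ^ d)).coeff k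
      = if d ∣ k then ∑ t ∈ s.powersetCard (k / d), ∏ i ∈ t, f i else 0 := by
  induction s using Finset.induction_on with
  | empty =>
    intro k
    rw [Finset.prod_empty]
    rcases Nat.eq_zero_or_pos k with rfl | hk
    · simp
    · rw [Polynomial.coeff_one, if_neg (by omega)]
      by_cases hdk : d ∣ k
      · rw [if_pos hdk]
        have h1 : 0 < k / d := Nat.div_pos (Nat.le_of_dvd hk hdk) hd
        rw [Finset.powersetCard_eq_empty.mpr (by rw [Finset.card_empty]; exact h1), Finset.sum_empty]
      · rw [if_neg hdk]
  | @insert a s ha ih =>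
    intro k
    rw [Finset.prod_insert ha]
    have expand : (1 + Polynomial.C (f a) * Polynomial.X ^ d)
          * (∏ i ∈ s, (1 + Polynomial.C (f i) * Polynomial.X ^ d))
        = (∏ i ∈ s, (1 + Polynomial.C (f i) * Polynomial.X ^ d))
          + Polynomial.C (f a)
            * ((∏ i ∈ s, (1 + Polynomial.C (f i) * Polynomial.X ^ d)) * Polynomial.X ^ d) := by
      ring
    rw [expand, Polynomial.coeff_add, Polynomial.coeff_C_mul, Polynomial.coeff_mul_X_pow', ih k]
    by_cases hdk : d ∣ k
    · by_cases hdle : d ≤ k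
      · rw [if_pos hdle, ih (k - d), if_pos (Nat.dvd_sub hdk dvd_rfl), if_pos hdk]
        have h1 : (k - d)/d = k/d - 1 := by
          obtain ⟨c, rfl⟩ := hdk
          rcases Nat.eq_zero_or_pos c with rfl | hc
          · simp
          · rw [Nat.mul_div_cancel_left _ hd]
            have : d * c - d = d * (c - 1) := by
              rw [Nat.mul_sub, Nat.mul_one]
            rw [this, Nat.mul_div_cancel_left _ hd]
        have h2 : k/d = (k/d - 1) + 1 := by
          have : 0 < k / d := Nat.div_pos hdle hd
          omega
        rw [h1, h2, sum_powersetCard_insert ha, if_pos hdk]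
        simp
      · have hk0 : k = 0 := by
          rcases hdk with ⟨c, rfl⟩
          rcases Nat.eq_zero_or_pos c with rfl | hc
          · simp
          · exfalso; exact hdle (Nat.le_mul_of_pos_right d hc)
        subst hk0
        rw [if_pos (dvd_zero d), if_neg (by omega), Nat.zero_div]
        simp
    · rw [if_neg hdk, if_neg hdk]
      by_cases hdle : d ≤ k
      · rw [if_pos hdle, ih (k-d), if_neg (fun h => hdk (by
          have := Nat.dvd_add h (dvd_refl d)
          rwa [Nat.sub_add_cancel hdle] at this))]
        simp
      · rw [if_neg hdle]
        simp


lemma prod_neg_pow {g : ℕ} (t : Finset (Fin g)) (f : Fin g → MvPolynomial (Fin g) ℂ) :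
    ∏ i ∈ t, (-(f i)) = (-1 : MvPolynomial (Fin g) ℂ)^t.card * ∏ i ∈ t, f i := by
  rw [← Finset.prod_const, ← Finset.prod_mul_distrib]
  exact Finset.prod_congr rfl fun i _ => by ring

lemma esq_eq (g k : ℕ) :
    esq g k = ∑ t ∈ Finset.powersetCard k Finset.univ, ∏ i ∈ t, (X i : MvPolynomial (Fin g) ℂ)^2 := by
  rw [esq, esymm, map_sum]
  exact Finset.sum_congr rfl fun t _ => by rw [map_prod]; exact Finset.prod_congr rfl fun i _ => by simp

lemma key_id (g k : ℕ) :
    (∑ r ∈ Finset.range (k+1),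
        esymm (Fin g) ℂ r * ((-1 : MvPolynomial (Fin g) ℂ)^(k-r) * esymm (Fin g) ℂ (k-r)))
      = if 2 ∣ k then (-1 : MvPolynomial (Fin g) ℂ)^(k/2) * esq g (k/2) else 0 := by
  classical
  set A := ∏ i : Fin g, (1 + Polynomial.C (X i : MvPolynomial (Fin g) ℂ) * Polynomial.X ^ 1) with hAdef
  set B := ∏ i : Fin g, (1 + Polynomial.C (-(X i : MvPolynomial (Fin g) ℂ)) * Polynomial.X ^ 1)
    with hBdef
  have hA : ∀ r, A.coeff r = esymm (Fin g) ℂ r := by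
    intro r
    rw [hAdef, coeff_prod_one_add 1 one_pos, if_pos (one_dvd r), Nat.div_one, esymm]
  have hB : ∀ r, B.coeff r = (-1 : MvPolynomial (Fin g) ℂ)^r * esymm (Fin g) ℂ (r : ℕ) := by
    intro r
    rw [hBdef, coeff_prod_one_add 1 one_pos, if_pos (one_dvd r), Nat.div_one, esymm,
      Finset.mul_sum]
    refine Finset.sum_congr rfl fun t ht => ?_
    rw [prod_neg_pow, (Finset.mem_powersetCard.mp ht).2]
  have hAB : A * B = ∏ i : Fin g,
      (1 + Polynomial.C (-((X i : MvPolynomial (Fin g) ℂ)^2)) * Polynomial.X ^ 2) := by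
    rw [hAdef, hBdef, ← Finset.prod_mul_distrib]
    refine Finset.prod_congr rfl fun i _ => ?_
    rw [map_neg, map_neg, map_pow]
    ring
  have hC : (A*B).coeff k = if 2 ∣ k then (-1 : MvPolynomial (Fin g) ℂ)^(k/2) * esq g (k/2)
      else 0 := by
    rw [hAB, coeff_prod_one_add 2 two_pos]
    split_ifs with h2
    · rw [esq_eq, Finset.mul_sum]
      refine Finset.sum_congr rfl fun t ht => ?_
      rw [prod_neg_pow, (Finset.mem_powersetCard.mp ht).2]
    · rfl
  rw [← hC, Polynomial.coeff_mul, Finset.Nat.sum_antidiagonal_eq_sum_range_succ_mk]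
  exact Finset.sum_congr rfl fun r _ => by rw [hA, hB]

lemma phi_ex (g r : ℕ) : phi g (ex g g r) = esymm (Fin g) ℂ r := by
  rw [ex, phi, aeval_rename]
  have h : (Sum.elim (fun i => (X i : MvPolynomial (Fin g) ℂ)) (fun i => - X i)) ∘ Sum.inl
      = fun i : Fin g => (X i : MvPolynomial (Fin g) ℂ) := rfl
  rw [h]
  exact aeval_X_left_apply _

lemma phi_ey (g s : ℕ) :
    phi g (ey g g s) = (-1 : MvPolynomial (Fin g) ℂ)^s * esymm (Fin g) ℂ s := by
  rw [ey, phi, aeval_rename]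
  have h : (Sum.elim (fun i => (X i : MvPolynomial (Fin g) ℂ)) (fun i => - X i)) ∘ Sum.inr
      = fun i : Fin g => -(X i : MvPolynomial (Fin g) ℂ) := rfl
  rw [h, esymm, map_sum, Finset.mul_sum]
  refine Finset.sum_congr rfl fun t ht => ?_
  simp only [map_prod, aeval_X]
  rw [prod_neg_pow, (Finset.mem_powersetCard.mp ht).2]

lemma phi_ck (g k : ℕ) :
    phi g (ck g g k)
      = if 2 ∣ k then (-1 : MvPolynomial (Fin g) ℂ)^(k/2) * esq g (k/2) else 0 := by
  rw [ck, map_sum, ← key_id g k]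
  exact Finset.sum_congr rfl fun r _ => by rw [map_mul, phi_ex, phi_ey]

lemma part1 (g : ℕ) : ∀ f ∈ Jpq g g, phi g f ∈ Ig g := by
  intro f hf
  have hle : Jpq g g ≤ Ideal.comap (phi g) (Ig g) := by
    rw [Jpq, Ideal.span_le]
    rintro x ⟨k, hk1, hk2, rfl⟩
    rw [SetLike.mem_coe, Ideal.mem_comap, phi_ck]
    split_ifs with h2
    · exact Ideal.mul_mem_left _ _ (Ideal.subset_span ⟨k/2, by omega, by omega, rfl⟩)
    · exact (Ig g).zero_mem
  exact hle hf

lemma sum_Icc_one (g : ℕ) : ∑ s ∈ Finset.Icc 1 g, s = g * (g+1) / 2 := by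
  induction g with
  | zero => simp
  | succ n ih =>
    rw [Finset.sum_Icc_succ_top (by omega), ih]
    obtain ⟨u, hu⟩ := Nat.even_mul_succ_self n
    obtain ⟨v, hv⟩ := Nat.even_mul_succ_self (n+1)
    have hab : (n+1) * (n+1+1) = n*(n+1) + 2*(n+1) := by ring
    omega

lemma part2 (g : ℕ) :
    phi g (∏ s ∈ Finset.Icc 1 g, ey g g s)
      = (-1 : MvPolynomial (Fin g) ℂ) ^ (g * (g + 1) / 2)
          * ∏ k ∈ Finset.Icc 1 g, esymm (Fin g) ℂ k := by
  rw [map_prod]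
  have h : ∀ s ∈ Finset.Icc 1 g, phi g (ey g g s)
      = (-1 : MvPolynomial (Fin g) ℂ)^s * esymm (Fin g) ℂ s := fun s _ => phi_ey g s
  rw [Finset.prod_congr rfl h, Finset.prod_mul_distrib, Finset.prod_pow_eq_pow_sum,
    sum_Icc_one]


section Part3

attribute [local instance] Classical.propDecidable

/-- exponent pattern `(2σ(j)+1)_j`. -/
noncomputable def alphaE (g : ℕ) (σ : Equiv.Perm (Fin g)) : Fin g →₀ ℕ :=
  Finsupp.equivFunOnFinite.symm (fun j => 2 * (σ j : ℕ) + 1)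

lemma alphaE_apply (g : ℕ) (σ : Equiv.Perm (Fin g)) (j : Fin g) :
    alphaE g σ j = 2 * (σ j : ℕ) + 1 := rfl

/-- The linear functional that pairs with the odd Vandermonde. -/
noncomputable def Lfun (g : ℕ) (F : MvPolynomial (Fin g) ℂ) : ℂ :=
  ∑ σ : Equiv.Perm (Fin g), ((Equiv.Perm.sign σ : ℤ) : ℂ) * coeff (alphaE g σ) F

lemma Lfun_add (g : ℕ) (F G : MvPolynomial (Fin g) ℂ) :
    Lfun g (F + G) = Lfun g F + Lfun g G := by
  simp [Lfun, coeff_add, mul_add, Finset.sum_add_distrib]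

lemma Lfun_zero (g : ℕ) : Lfun g 0 = 0 := by simp [Lfun]

noncomputable def m2 {g : ℕ} (S : Finset (Fin g)) : Fin g →₀ ℕ :=
  ∑ i ∈ S, Finsupp.single i 2

lemma m2_apply {g : ℕ} (S : Finset (Fin g)) (j : Fin g) :
    m2 S j = if j ∈ S then 2 else 0 := by
  classical
  rw [m2, Finset.sum_apply']
  simp [Finsupp.single_apply, Finset.sum_ite_eq' S j (fun _ => 2)]

lemma esq_eq_monomials (g k : ℕ) :
    esq g k = ∑ S ∈ Finset.powersetCard k Finset.univ, monomial (m2 S) 1 := by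
  rw [esq_eq]
  refine Finset.sum_congr rfl fun S _ => ?_
  rw [m2, monomial_sum_one]
  exact Finset.prod_congr rfl fun i _ => X_pow_eq_monomial


variable {g : ℕ}

def sInd (S : Finset (Fin g)) (j : Fin g) : ℕ := if j ∈ S then 1 else 0

/-- `v_j = σ(j) - [j ∈ S]`; under the matching condition it only depends on `α_σ - m2 S`. -/
def vOf (p : Equiv.Perm (Fin g) × Finset (Fin g)) : Fin g → ℕ :=
  fun j => (p.1 j : ℕ) - sInd p.2 j

lemma le_apply {p : Equiv.Perm (Fin g) × Finset (Fin g)} (hp : m2 p.2 ≤ alphaE g p.1)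
    (j : Fin g) : m2 p.2 j ≤ alphaE g p.1 j := Finsupp.le_def.mp hp j

lemma sigma_eq {p : Equiv.Perm (Fin g) × Finset (Fin g)} (hp : m2 p.2 ≤ alphaE g p.1)
    (j : Fin g) : (p.1 j : ℕ) = vOf p j + sInd p.2 j := by
  have h := le_apply hp j
  rw [m2_apply, alphaE_apply] at h
  unfold vOf sInd
  by_cases hj : j ∈ p.2
  · rw [if_pos hj] at h ⊢
    omega
  · rw [if_neg hj]
    omega

lemma mu_apply {p : Equiv.Perm (Fin g) × Finset (Fin g)} (hp : m2 p.2 ≤ alphaE g p.1)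
    (j : Fin g) : (alphaE g p.1 - m2 p.2) j = 2 * vOf p j + 1 := by
  have hs := sigma_eq hp j
  have h := le_apply hp j
  rw [Finsupp.tsub_apply, alphaE_apply, m2_apply] at *
  unfold sInd at hs
  by_cases hj : j ∈ p.2
  · rw [if_pos hj] at hs h ⊢
    omega
  · rw [if_neg hj] at hs h ⊢
    omega

lemma dup_exists (p : Equiv.Perm (Fin g) × Finset (Fin g)) (hp : m2 p.2 ≤ alphaE g p.1)
    (hne : p.2.Nonempty) : ∃ q : Fin g × Fin g, q.1 ≠ q.2 ∧ vOf p q.1 = vOf p q.2 := by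
  obtain ⟨j0, hj0S, hmin⟩ := Finset.exists_min_image p.2 (fun j => (p.1 j : ℕ)) hne
  have h1 : 1 ≤ (p.1 j0 : ℕ) := by
    have h := le_apply hp j0
    rw [m2_apply, if_pos hj0S, alphaE_apply] at h
    omega
  have hlt : (p.1 j0 : ℕ) - 1 < g := by
    have := (p.1 j0).isLt
    omega
  set t1 : Fin g := ⟨(p.1 j0 : ℕ) - 1, hlt⟩ with ht1
  set j1 := p.1.symm t1 with hj1
  have hσj1 : p.1 j1 = t1 := p.1.apply_symm_apply t1
  have hv : (p.1 j1 : ℕ) = (p.1 j0 : ℕ) - 1 := by rw [hσj1]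
  have hj1ne : j1 ≠ j0 := by
    intro e
    rw [e] at hv
    omega
  have hj1S : j1 ∉ p.2 := by
    intro hin
    have := hmin j1 hin
    omega
  refine ⟨(j0, j1), by simpa using hj1ne.symm, ?_⟩
  unfold vOf sInd
  simp only [if_pos hj0S, if_neg hj1S]
  omega

def pairEx (v : Fin g → ℕ) : Prop := ∃ q : Fin g × Fin g, q.1 ≠ q.2 ∧ v q.1 = v q.2

noncomputable def thePair (v : Fin g → ℕ) (hv : pairEx v) : Fin g × Fin g := Classical.choose hv

lemma thePair_spec (v : Fin g → ℕ) (hv : pairEx v) :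
    (thePair v hv).1 ≠ (thePair v hv).2 ∧ v (thePair v hv).1 = v (thePair v hv).2 :=
  Classical.choose_spec hv

lemma thePair_congr {v w : Fin g → ℕ} (h : v = w) (hv : pairEx v) (hw : pairEx w) :
    thePair v hv = thePair w hw := by
  subst h
  rfl

lemma card_symmDiff_pair {a b : Fin g} {S : Finset (Fin g)} (hab : a ≠ b)
    (h : a ∈ S ↔ b ∉ S) : (symmDiff S {a, b}).card = S.card := by
  classical
  by_cases ha : a ∈ S
  · have hb : b ∉ S := h.mp ha
    have hset : symmDiff S {a, b} = insert b (S.erase a) := by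
      ext j
      simp only [Finset.mem_symmDiff, Finset.mem_insert, Finset.mem_erase,
        Finset.mem_singleton]
      by_cases hja : j = a <;> by_cases hjb : j = b <;> simp_all <;> tauto
    rw [hset, Finset.card_insert_of_notMem (by simp [Finset.mem_erase, hb]),
      Finset.card_erase_of_mem ha]
    have := Finset.card_pos.mpr ⟨a, ha⟩
    omega
  · have hb : b ∈ S := by
      by_contra hb
      exact ha (h.mpr hb)
    have hset : symmDiff S {a, b} = insert a (S.erase b) := by
      ext j
      simp only [Finset.mem_symmDiff, Finset.mem_insert, Finset.mem_erase,
        Finset.mem_singleton]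
      by_cases hja : j = a <;> by_cases hjb : j = b <;> simp_all <;> tauto
    rw [hset, Finset.card_insert_of_notMem (by simp [Finset.mem_erase, ha]),
      Finset.card_erase_of_mem hb]
    have := Finset.card_pos.mpr ⟨b, hb⟩
    omega

/-- The toggled pair satisfies the same matching data. -/
lemma core_step (p : Equiv.Perm (Fin g) × Finset (Fin g)) (hp : m2 p.2 ≤ alphaE g p.1)
    {a b : Fin g} (hab : a ≠ b) (hv : vOf p a = vOf p b) :
    alphaE g (p.1 * Equiv.swap a b)
        = (alphaE g p.1 - m2 p.2) + m2 (symmDiff p.2 {a, b}) ∧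
      (a ∈ p.2 ↔ b ∉ p.2) := by
  have honein : a ∈ p.2 ↔ b ∉ p.2 := by
    have hss : sInd p.2 a ≠ sInd p.2 b := by
      intro hss
      apply hab
      apply p.1.injective
      apply Fin.val_injective
      rw [sigma_eq hp a, sigma_eq hp b, hv, hss]
    unfold sInd at hss
    by_cases h1 : a ∈ p.2 <;> by_cases h2 : b ∈ p.2 <;> simp_all
  refine ⟨?_, honein⟩
  ext j
  rw [Finsupp.add_apply, mu_apply hp, alphaE_apply, m2_apply]
  by_cases hja : j = a
  · subst hja
    rw [Equiv.Perm.mul_apply, Equiv.swap_apply_left]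
    have hmem : j ∈ symmDiff p.2 {j, b} ↔ j ∉ p.2 := by
      simp [Finset.mem_symmDiff]
    have hsb := sigma_eq hp b
    unfold sInd at hsb
    by_cases hbS : b ∈ p.2
    · have haS : j ∉ p.2 := fun h => (honein.mp h) hbS
      rw [if_pos (hmem.mpr haS)]
      rw [if_pos hbS] at hsb
      rw [← hv] at hsb
      omega
    · have haS : j ∈ p.2 := honein.mpr hbS
      rw [if_neg (fun hh => (hmem.mp hh) haS)]
      rw [if_neg hbS] at hsb
      rw [← hv] at hsb
      omega
  · by_cases hjb : j = b
    · subst hjb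
      rw [Equiv.Perm.mul_apply, Equiv.swap_apply_right]
      have hmem : j ∈ symmDiff p.2 {a, j} ↔ j ∉ p.2 := by
        simp [Finset.mem_symmDiff]
      have hsa := sigma_eq hp a
      unfold sInd at hsa
      by_cases haS : a ∈ p.2
      · have hbS : j ∉ p.2 := honein.mp haS
        rw [if_pos (hmem.mpr hbS)]
        rw [if_pos haS] at hsa
        rw [hv] at hsa
        omega
      · have hbS : j ∈ p.2 := by
          by_contra hbS
          exact haS (honein.mpr hbS)
        rw [if_neg (fun hh => (hmem.mp hh) hbS)]
        rw [if_neg haS] at hsa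
        rw [hv] at hsa
        omega
    · rw [Equiv.Perm.mul_apply, Equiv.swap_apply_of_ne_of_ne hja hjb]
      have hmem : j ∈ symmDiff p.2 {a, b} ↔ j ∈ p.2 := by
        simp [Finset.mem_symmDiff, hja, hjb]
      have hsj := sigma_eq hp j
      unfold sInd at hsj
      by_cases hjS : j ∈ p.2
      · rw [if_pos (hmem.mpr hjS)]
        rw [if_pos hjS] at hsj
        omega
      · rw [if_neg (fun hh => hjS (hmem.mp hh))]
        rw [if_neg hjS] at hsj
        omega

noncomputable def invol (g : ℕ) (p : Equiv.Perm (Fin g) × Finset (Fin g)) :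
    Equiv.Perm (Fin g) × Finset (Fin g) :=
  if hc : (m2 p.2 ≤ alphaE g p.1) ∧ p.2.Nonempty then
    ((p.1 * Equiv.swap (thePair (vOf p) (dup_exists p hc.1 hc.2)).1
        (thePair (vOf p) (dup_exists p hc.1 hc.2)).2),
      symmDiff p.2 {(thePair (vOf p) (dup_exists p hc.1 hc.2)).1,
        (thePair (vOf p) (dup_exists p hc.1 hc.2)).2})
  else p

lemma invol_spec (p : Equiv.Perm (Fin g) × Finset (Fin g)) (hp : m2 p.2 ≤ alphaE g p.1)
    (hne : p.2.Nonempty) :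
    (m2 (invol g p).2 ≤ alphaE g (invol g p).1) ∧
      (alphaE g (invol g p).1 - m2 (invol g p).2 = alphaE g p.1 - m2 p.2) ∧
      ((invol g p).2.card = p.2.card) ∧
      (Equiv.Perm.sign (invol g p).1 = - Equiv.Perm.sign p.1) ∧
      ((invol g p).1 ≠ p.1) := by
  have hc : (m2 p.2 ≤ alphaE g p.1) ∧ p.2.Nonempty := ⟨hp, hne⟩
  rw [invol, dif_pos hc]
  set q := thePair (vOf p) (dup_exists p hc.1 hc.2) with hq
  obtain ⟨hqne, hqv⟩ := thePair_spec (vOf p) (dup_exists p hc.1 hc.2)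
  obtain ⟨halpha, honein⟩ := core_step p hp hqne hqv
  have hle : m2 (symmDiff p.2 {q.1, q.2}) ≤ alphaE g (p.1 * Equiv.swap q.1 q.2) := by
    rw [halpha]
    exact le_add_self
  refine ⟨hle, ?_, card_symmDiff_pair hqne honein, ?_, ?_⟩
  · rw [halpha, add_tsub_cancel_right]
  · simp [Equiv.Perm.sign_swap hqne]; exact hqne
  · intro hEq
    have h2 : p.1 * Equiv.swap q.1 q.2 = p.1 * 1 := by
      rw [mul_one]
      exact hEq
    have hsw := mul_left_cancel h2
    have := congrArg (fun e => e q.1) hsw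
    simp only [Equiv.swap_apply_left, Equiv.Perm.coe_one, id_eq] at this
    exact hqne this.symm

lemma vOf_invol (p : Equiv.Perm (Fin g) × Finset (Fin g)) (hp : m2 p.2 ≤ alphaE g p.1)
    (hne : p.2.Nonempty) : vOf (invol g p) = vOf p := by
  obtain ⟨hle, hmu, _, _, _⟩ := invol_spec p hp hne
  funext j
  have h1 := mu_apply hle j
  have h2 := mu_apply hp j
  rw [hmu] at h1
  omega

lemma invol_invol (p : Equiv.Perm (Fin g) × Finset (Fin g)) (hp : m2 p.2 ≤ alphaE g p.1)
    (hne : p.2.Nonempty) : invol g (invol g p) = p := by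
  obtain ⟨hle, hmu, hcard, _, _⟩ := invol_spec p hp hne
  have hne' : (invol g p).2.Nonempty := by
    rw [← Finset.card_pos, hcard, Finset.card_pos]
    exact hne
  have hvv := vOf_invol p hp hne
  have hc : (m2 p.2 ≤ alphaE g p.1) ∧ p.2.Nonempty := ⟨hp, hne⟩
  have hc' : (m2 (invol g p).2 ≤ alphaE g (invol g p).1) ∧ (invol g p).2.Nonempty := ⟨hle, hne'⟩
  have hpairEq : thePair (vOf (invol g p)) (dup_exists (invol g p) hc'.1 hc'.2)
      = thePair (vOf p) (dup_exists p hc.1 hc.2) :=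
    thePair_congr hvv _ _
  set q := thePair (vOf p) (dup_exists p hc.1 hc.2) with hqdef
  have hinner : invol g p = (p.1 * Equiv.swap q.1 q.2, symmDiff p.2 {q.1, q.2}) := by
    rw [invol, dif_pos hc]
  conv_lhs => rw [invol, dif_pos hc', hpairEq]
  rw [hinner]
  simp only
  rw [mul_assoc, Equiv.swap_mul_self, mul_one, symmDiff_symmDiff_cancel_right]

set_option maxHeartbeats 1000000 in
lemma Lfun_mul_esq (g k : ℕ) (hk : 1 ≤ k) (h : MvPolynomial (Fin g) ℂ) :
    Lfun g (h * esq g k) = 0 := by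
  classical
  rw [Lfun, esq_eq_monomials]
  have step1 : ∀ σ : Equiv.Perm (Fin g),
      coeff (alphaE g σ) (h * ∑ S ∈ Finset.powersetCard k Finset.univ, monomial (m2 S) 1)
        = ∑ S ∈ Finset.powersetCard k Finset.univ,
            (if m2 S ≤ alphaE g σ then coeff (alphaE g σ - m2 S) h else 0) := by
    intro σ
    rw [Finset.mul_sum, coeff_sum]
    refine Finset.sum_congr rfl fun S _ => ?_
    rw [coeff_mul_monomial']
    split_ifs <;> simp
  simp_rw [step1, Finset.mul_sum]
  rw [← Finset.sum_product']
  have hmem_ne : ∀ p : Equiv.Perm (Fin g) × Finset (Fin g),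
      p ∈ Finset.univ ×ˢ Finset.powersetCard k Finset.univ → p.2.Nonempty := by
    intro p hmem
    rw [Finset.mem_product] at hmem
    have hcard := (Finset.mem_powersetCard.mp hmem.2).2
    rw [← Finset.card_pos, hcard]
    omega
  refine Finset.sum_involution (fun p _ => invol g p) ?_ ?_ ?_ ?_
  · intro p hmem
    by_cases hc : m2 p.2 ≤ alphaE g p.1
    · obtain ⟨hle, hmu, _, hsign, _⟩ := invol_spec p hc (hmem_ne p hmem)
      rw [if_pos hc, if_pos hle, hmu, hsign]
      push_cast
      ring
    · have hfix : invol g p = p := by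
        rw [invol, dif_neg (fun hcc => hc hcc.1)]
      rw [hfix, if_neg hc]
      ring
  · intro p hmem hf
    by_cases hc : m2 p.2 ≤ alphaE g p.1
    · obtain ⟨_, _, _, _, hneq⟩ := invol_spec p hc (hmem_ne p hmem)
      intro hEq
      exact hneq (congrArg Prod.fst hEq)
    · rw [if_neg hc, mul_zero] at hf
      exact absurd rfl hf
  · intro p hmem
    by_cases hc : m2 p.2 ≤ alphaE g p.1
    · obtain ⟨_, _, hcard, _, _⟩ := invol_spec p hc (hmem_ne p hmem)
      rw [Finset.mem_product] at hmem ⊢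
      refine ⟨Finset.mem_univ _, ?_⟩
      rw [Finset.mem_powersetCard]
      exact ⟨Finset.subset_univ _, by rw [hcard]; exact (Finset.mem_powersetCard.mp hmem.2).2⟩
    · rw [invol, dif_neg (fun hcc => hc hcc.1)]
      exact hmem
  · intro p hmem
    by_cases hc : m2 p.2 ≤ alphaE g p.1
    · exact invol_invol p hc (hmem_ne p hmem)
    · have hfix : invol g p = p := by
        rw [invol, dif_neg (fun hcc => hc hcc.1)]
      rw [hfix, hfix]

lemma Lfun_Ig (g : ℕ) {f : MvPolynomial (Fin g) ℂ} (hf : f ∈ Ig g) :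
    ∀ h, Lfun g (h * f) = 0 := by
  rw [Ig] at hf
  refine Submodule.span_induction (p := fun x _ => ∀ h, Lfun g (h * x) = 0) ?_ ?_ ?_ ?_ hf
  · rintro x ⟨k, hk1, hk2, rfl⟩ h
    exact Lfun_mul_esq g k hk1 h
  · intro h
    rw [mul_zero, Lfun_zero]
  · intro x y _ _ hx hy h
    rw [mul_add, Lfun_add, hx, hy, add_zero]
  · intro a x _ hx h
    rw [smul_eq_mul, show h * (a * x) = (h * a) * x from by ring]
    exact hx (h * a)

noncomputable def m1 {g : ℕ} (S : Finset (Fin g)) : Fin g →₀ ℕ :=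
  ∑ i ∈ S, Finsupp.single i 1

lemma m1_apply {g : ℕ} (S : Finset (Fin g)) (j : Fin g) :
    m1 S j = if j ∈ S then 1 else 0 := by
  classical
  rw [m1, Finset.sum_apply']
  simp [Finsupp.single_apply, Finset.sum_ite_eq' S j (fun _ => 1)]

lemma sum_m1_apply {g : ℕ} (P : Fin g → Finset (Fin g)) (j : Fin g) :
    (∑ k : Fin g, m1 (P k)) j = (Finset.univ.filter (fun k : Fin g => j ∈ P k)).card := by
  classical
  rw [Finset.sum_apply']
  simp_rw [m1_apply]
  rw [Finset.sum_boole]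
  simp

lemma card_filter_val_le (g a : ℕ) :
    ((Finset.univ : Finset (Fin g)).filter (fun j : Fin g => a ≤ (j : ℕ))).card = g - a := by
  classical
  have h : ((Finset.univ : Finset (Fin g)).filter (fun j : Fin g => a ≤ (j : ℕ))).card
      = (Finset.Ico a g).card := by
    refine Finset.card_bij (fun j _ => (j : ℕ)) ?_ ?_ ?_
    · intro x hx
      rw [Finset.mem_filter] at hx
      rw [Finset.mem_Ico]
      exact ⟨hx.2, x.isLt⟩
    · intro x _ y _ hxy
      exact Fin.val_injective hxy
    · intro b hb
      rw [Finset.mem_Ico] at hb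
      exact ⟨⟨b, hb.2⟩, Finset.mem_filter.mpr ⟨Finset.mem_univ _, hb.1⟩, rfl⟩
  rw [h, Nat.card_Ico]

lemma E_eq (g : ℕ) : (∏ k ∈ Finset.Icc 1 g, esymm (Fin g) ℂ k)
    = ∏ k : Fin g, esymm (Fin g) ℂ ((k : ℕ) + 1) := by
  rw [Fin.prod_univ_eq_prod_range (fun k => esymm (Fin g) ℂ (k + 1)) g]
  have h : Finset.Icc 1 g = Finset.Ico 1 (g + 1) := by
    ext j
    simp [Finset.mem_Icc, Finset.mem_Ico]
  rw [h, Finset.prod_Ico_eq_prod_range]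
  simp only [Nat.add_sub_cancel]
  exact Finset.prod_congr rfl fun i _ => by rw [Nat.add_comm]

lemma coeff_E (g : ℕ) (μ : Fin g →₀ ℕ) :
    coeff μ (∏ k ∈ Finset.Icc 1 g, esymm (Fin g) ℂ k)
      = ∑ P ∈ Fintype.piFinset
            (fun k : Fin g => Finset.powersetCard ((k : ℕ) + 1) (Finset.univ : Finset (Fin g))),
          (if (∑ k : Fin g, m1 (P k)) = μ then 1 else 0) := by
  classical
  rw [E_eq]
  simp_rw [esymm_eq_sum_monomial]
  rw [Finset.prod_univ_sum]
  have hterm : ∀ P : Fin g → Finset (Fin g),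
      (∏ k : Fin g, monomial (∑ i ∈ P k, Finsupp.single i (1:ℕ)) (1:ℂ))
        = monomial (∑ k : Fin g, m1 (P k)) 1 := by
    intro P
    rw [monomial_sum_one]
    exact Finset.prod_congr rfl fun k _ => by rw [m1]
  simp_rw [hterm]
  rw [coeff_sum]
  refine Finset.sum_congr rfl fun P _ => ?_
  rw [coeff_monomial]

lemma peel (g : ℕ) (σ : Equiv.Perm (Fin g)) (P : Fin g → Finset (Fin g))
    (hP : ∀ k : Fin g, (P k).card = (k : ℕ) + 1)
    (heq : ∀ j : Fin g, ((Finset.univ.filter (fun k : Fin g => j ∈ P k)).card) + (j : ℕ)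
        = 2 * (σ j : ℕ) + 1) :
    σ = 1 ∧ ∀ k : Fin g, P k
      = Finset.univ.filter (fun j : Fin g => g ≤ (j : ℕ) + (k : ℕ) + 1) := by
  classical
  have main : ∀ m : ℕ, ∀ i : Fin g, g - m ≤ (i : ℕ) →
      ((σ i : ℕ) = (i : ℕ) ∧ ∀ k : Fin g, (i ∈ P k ↔ g ≤ (i : ℕ) + (k : ℕ) + 1)) := by
    intro m
    induction m with
    | zero =>
      intro i hi
      exact absurd i.isLt (by omega)
    | succ m ih =>
      intro i hi
      by_cases hold : g - m ≤ (i : ℕ)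
      · exact ih i hold
      have him : (i : ℕ) = g - m - 1 ∧ m < g := by
        have := i.isLt
        omega
      have hA : ∀ k : Fin g, (k : ℕ) + 1 ≤ m →
          P k = Finset.univ.filter (fun j : Fin g => g ≤ (j : ℕ) + (k : ℕ) + 1) := by
        intro k hk
        have hsub : Finset.univ.filter (fun j : Fin g => g ≤ (j : ℕ) + (k : ℕ) + 1) ⊆ P k := by
          intro j hj
          rw [Finset.mem_filter] at hj
          have hjge : g - m ≤ (j : ℕ) := by omega
          exact ((ih j hjge).2 k).mpr hj.2
        refine (Finset.eq_of_subset_of_card_le hsub ?_).symm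
        rw [hP k]
        have hcf : (Finset.univ.filter (fun j : Fin g => g ≤ (j : ℕ) + (k : ℕ) + 1)).card
            = (k : ℕ) + 1 := by
          have h1 : (Finset.univ.filter (fun j : Fin g => g ≤ (j : ℕ) + (k : ℕ) + 1))
              = (Finset.univ.filter (fun j : Fin g => g - ((k : ℕ) + 1) ≤ (j : ℕ))) := by
            ext j
            simp only [Finset.mem_filter, Finset.mem_univ, true_and]
            omega
          rw [h1, card_filter_val_le]
          have := k.isLt
          omega
        rw [hcf]
      have hB : ∀ j : Fin g, (j : ℕ) ≤ g - m - 1 →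
          (Finset.univ.filter (fun k : Fin g => j ∈ P k))
            ⊆ Finset.univ.filter (fun k : Fin g => m ≤ (k : ℕ)) := by
        intro j hj k hk
        rw [Finset.mem_filter] at hk ⊢
        refine ⟨Finset.mem_univ _, ?_⟩
        by_contra hkm
        push_neg at hkm
        rw [hA k (by omega), Finset.mem_filter] at hk
        have := hk.2.2
        omega
      have hBcard : ∀ j : Fin g, (j : ℕ) ≤ g - m - 1 →
          (Finset.univ.filter (fun k : Fin g => j ∈ P k)).card ≤ g - m := by
        intro j hj
        calc (Finset.univ.filter (fun k : Fin g => j ∈ P k)).card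
            ≤ (Finset.univ.filter (fun k : Fin g => m ≤ (k : ℕ))).card :=
              Finset.card_le_card (hB j hj)
          _ = g - m := card_filter_val_le g m
      have hj := heq (σ.symm i)
      rw [Equiv.apply_symm_apply] at hj
      have hjlow : (σ.symm i : ℕ) ≤ g - m - 1 := by
        by_contra hhi
        push_neg at hhi
        have h2 := (ih (σ.symm i) (by omega)).1
        rw [show σ (σ.symm i) = i from Equiv.apply_symm_apply σ i] at h2
        omega
      have hcj := hBcard (σ.symm i) hjlow
      have hji : (σ.symm i : ℕ) = (i : ℕ) := by omega
      have hjeq : σ.symm i = i := Fin.val_injective hji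
      have hσi : (σ i : ℕ) = (i : ℕ) := by
        conv_lhs => rw [← hjeq, Equiv.apply_symm_apply]
      have hci : (Finset.univ.filter (fun k : Fin g => i ∈ P k)).card = g - m := by
        rw [hjeq] at hj
        omega
      refine ⟨hσi, ?_⟩
      have hfeq : Finset.univ.filter (fun k : Fin g => i ∈ P k)
          = Finset.univ.filter (fun k : Fin g => m ≤ (k : ℕ)) := by
        apply Finset.eq_of_subset_of_card_le (hB i (by omega))
        rw [hci, card_filter_val_le]
      intro k
      constructor
      · intro hkP
        have hmem : k ∈ Finset.univ.filter (fun k : Fin g => m ≤ (k : ℕ)) := by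
          rw [← hfeq, Finset.mem_filter]
          exact ⟨Finset.mem_univ _, hkP⟩
        rw [Finset.mem_filter] at hmem
        omega
      · intro hgik
        have hmk : m ≤ (k : ℕ) := by omega
        have hmem : k ∈ Finset.univ.filter (fun k : Fin g => i ∈ P k) := by
          rw [hfeq, Finset.mem_filter]
          exact ⟨Finset.mem_univ _, hmk⟩
        exact (Finset.mem_filter.mp hmem).2
  constructor
  · apply Equiv.ext
    intro j
    have := (main g j (by omega)).1
    rw [Equiv.Perm.one_apply]
    exact Fin.val_injective this
  · intro k
    ext j
    rw [Finset.mem_filter]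
    have := (main g j (by omega)).2 k
    exact ⟨fun hh => ⟨Finset.mem_univ _, this.mp hh⟩, fun hh => this.mpr hh.2⟩

noncomputable def betaF (g : ℕ) : Fin g →₀ ℕ :=
  Finsupp.equivFunOnFinite.symm (fun j => (j : ℕ))

lemma betaF_apply (g : ℕ) (j : Fin g) : betaF g j = (j : ℕ) := rfl

lemma coeff_E_shift (g : ℕ) (σ : Equiv.Perm (Fin g)) (hle : betaF g ≤ alphaE g σ) :
    coeff (alphaE g σ - betaF g) (∏ k ∈ Finset.Icc 1 g, esymm (Fin g) ℂ k)
      = if σ = 1 then 1 else 0 := by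
  classical
  rw [coeff_E]
  have hkey : ∀ P : Fin g → Finset (Fin g),
      P ∈ Fintype.piFinset
          (fun k : Fin g => Finset.powersetCard ((k : ℕ) + 1) (Finset.univ : Finset (Fin g))) →
      (∑ k : Fin g, m1 (P k)) = alphaE g σ - betaF g →
      (σ = 1 ∧ ∀ k : Fin g, P k
        = Finset.univ.filter (fun j : Fin g => g ≤ (j : ℕ) + (k : ℕ) + 1)) := by
    intro P hPmem hmatch
    apply peel g σ P
    · intro k
      exact (Finset.mem_powersetCard.mp (Fintype.mem_piFinset.mp hPmem k)).2
    · intro j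
      have h1 : (∑ k : Fin g, m1 (P k)) j = (alphaE g σ - betaF g) j := by rw [hmatch]
      rw [sum_m1_apply] at h1
      rw [Finsupp.tsub_apply, alphaE_apply, betaF_apply] at h1
      have hlej := Finsupp.le_def.mp hle j
      rw [alphaE_apply, betaF_apply] at hlej
      omega
  by_cases hσ : σ = 1
  · subst hσ
    rw [if_pos rfl]
    set P0 : Fin g → Finset (Fin g) :=
      fun k => Finset.univ.filter (fun j : Fin g => g ≤ (j : ℕ) + (k : ℕ) + 1) with hP0
    have hP0card : ∀ k : Fin g, (P0 k).card = (k : ℕ) + 1 := by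
      intro k
      have h1 : P0 k = Finset.univ.filter (fun j : Fin g => g - ((k : ℕ) + 1) ≤ (j : ℕ)) := by
        ext j
        simp only [hP0, Finset.mem_filter, Finset.mem_univ, true_and]
        omega
      rw [h1, card_filter_val_le]
      have := k.isLt
      omega
    have hP0mem : P0 ∈ Fintype.piFinset
        (fun k : Fin g => Finset.powersetCard ((k : ℕ) + 1) (Finset.univ : Finset (Fin g))) := by
      rw [Fintype.mem_piFinset]
      intro k
      rw [Finset.mem_powersetCard]
      exact ⟨Finset.subset_univ _, hP0card k⟩
    have hP0match : (∑ k : Fin g, m1 (P0 k)) = alphaE g (1 : Equiv.Perm (Fin g)) - betaF g := by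
      ext j
      rw [sum_m1_apply, Finsupp.tsub_apply, alphaE_apply, betaF_apply]
      have h1 : Finset.univ.filter (fun k : Fin g => j ∈ P0 k)
          = Finset.univ.filter (fun k : Fin g => g - ((j : ℕ) + 1) ≤ (k : ℕ)) := by
        ext k
        simp only [hP0, Finset.mem_filter, Finset.mem_univ, true_and]
        omega
      rw [h1, card_filter_val_le]
      have := j.isLt
      simp only [Equiv.Perm.one_apply]
      omega
    rw [Finset.sum_eq_single P0]
    · rw [if_pos hP0match]
    · intro P hPmem hPne
      rw [if_neg]
      intro hmatch
      obtain ⟨_, hPform⟩ := hkey P hPmem hmatch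
      exact hPne (funext hPform)
    · intro habs
      exact absurd hP0mem habs
  · rw [if_neg hσ]
    apply Finset.sum_eq_zero
    intro P hPmem
    rw [if_neg]
    intro hmatch
    exact hσ (hkey P hPmem hmatch).1

lemma betaF_le_one (g : ℕ) : betaF g ≤ alphaE g (1 : Equiv.Perm (Fin g)) := by
  rw [Finsupp.le_def]
  intro j
  rw [betaF_apply, alphaE_apply, Equiv.Perm.one_apply]
  omega

lemma Lfun_top (g : ℕ) :
    Lfun g ((∏ k ∈ Finset.Icc 1 g, esymm (Fin g) ℂ k) * monomial (betaF g) 1) = 1 := by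
  classical
  rw [Lfun]
  have hterm : ∀ σ : Equiv.Perm (Fin g),
      coeff (alphaE g σ) ((∏ k ∈ Finset.Icc 1 g, esymm (Fin g) ℂ k) * monomial (betaF g) 1)
        = if betaF g ≤ alphaE g σ then (if σ = 1 then (1:ℂ) else 0) else 0 := by
    intro σ
    rw [coeff_mul_monomial']
    by_cases h1 : betaF g ≤ alphaE g σ
    · rw [if_pos h1, if_pos h1, mul_one, coeff_E_shift g σ h1]
    · rw [if_neg h1, if_neg h1]
  simp_rw [hterm]
  rw [Finset.sum_eq_single (1 : Equiv.Perm (Fin g))]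
  · rw [if_pos (betaF_le_one g), if_pos rfl]
    simp
  · intro σ _ hσ
    rw [if_neg hσ]
    split_ifs <;> ring
  · intro habs
    exact absurd (Finset.mem_univ _) habs

end Part3

end Stmt11

/-- (proof of Theorem `unitary`, part 2) `φ` maps the ideal `J_{g,g}` into
`I_g`; moreover `φ(e₁(y) e₂(y) ⋯ e_g(y)) = (-1)^{g(g+1)/2} e₁ e₂ ⋯ e_g`, which
does not lie in `I_g`: the class `τ₁τ₂⋯τ_g` restricts to `±` the top-degree
class `σ₁σ₂⋯σ_g`, a nonzero element. -/
theorem stmt_11 (g : ℕ) (hg : 1 ≤ g) :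
    (∀ f ∈ Jpq g g, phi g f ∈ Ig g) ∧
      phi g (∏ s ∈ Finset.Icc 1 g, ey g g s) =
        (-1 : MvPolynomial (Fin g) ℂ) ^ (g * (g + 1) / 2) *
          ∏ k ∈ Finset.Icc 1 g, esymm (Fin g) ℂ k ∧
      phi g (∏ s ∈ Finset.Icc 1 g, ey g g s) ∉ Ig g := by
  refine ⟨Stmt11.part1 g, Stmt11.part2 g, ?_⟩
  rw [Stmt11.part2 g]
  intro hmem
  have hEmem : (∏ k ∈ Finset.Icc 1 g, esymm (Fin g) ℂ k) ∈ Ig g := by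
    have h2 := Ideal.mul_mem_left (Ig g)
      ((-1 : MvPolynomial (Fin g) ℂ) ^ (g * (g + 1) / 2)) hmem
    rwa [← mul_assoc, ← pow_add, Even.neg_one_pow ⟨g * (g + 1) / 2, rfl⟩, one_mul] at h2
  have h0 := Stmt11.Lfun_Ig g hEmem (monomial (Stmt11.betaF g) 1)
  rw [mul_comm, Stmt11.Lfun_top g] at h0
  exact one_ne_zero h0
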